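/- arXiv:1303.2302 — 2 statements merged into one kernel-verified Lean document; each statement's English description precedes it below -/
import Mathlib

section
/- For every n ≥ 1, B_n^-(x) = x^n B_n^+(1/x); equivalently, writing B_n^+(x) = Σ_{k=0}^n b_k^+ x^k and B_n^-(x) = Σ_{k=0}^n b_k^- x^k, one has b_k^- = b_{n−k}^+ for all 0 ≤ k ≤ n. -/
open Polynomial Finset

/-- A signed permutation of `[n]`, encoded by its word: position `i` (0-indexed)
holds the pair (absolute value minus one, sign) of the letter `w(a_{i+1})`. -/
def IsSP {n : ℕ} (u : Fin n → Fin n × Bool) : Prop :=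
  Function.Bijective fun i => (u i).1

instance {n : ℕ} (u : Fin n → Fin n × Bool) : Decidable (IsSP u) :=
  inferInstanceAs (Decidable (Function.Bijective _))

/-- the letter `w(a_{i+1})` at position `i` of the word -/
def letterW {n : ℕ} (u : Fin n → Fin n × Bool) (i : Fin n) : ℤ :=
  if (u i).2 then ((u i).1 : ℤ) + 1 else -(((u i).1 : ℤ) + 1)

/-- `a_{k+1}`: the element of the domain `S` with absolute value `k+1` -/
def aVal {n : ℕ} (u : Fin n → Fin n × Bool) (k : Fin n) : ℤ :=
  if ∃ j, u j = (k, true) then ((k : ℤ) + 1) else -((k : ℤ) + 1)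

/-- the number of type `B` excedances -/
def excB {n : ℕ} (u : Fin n → Fin n × Bool) : ℕ :=
  (univ.filter fun k : Fin n =>
    aVal u k < letterW u k ∨ (aVal u k < 0 ∧ letterW u k = aVal u k)).card

/-- a derangement: no positive fixed point -/
def IsDerB {n : ℕ} (u : Fin n → Fin n × Bool) : Prop :=
  ∀ k : Fin n, 0 < aVal u k → letterW u k ≠ aVal u k

instance {n : ℕ} (u : Fin n → Fin n × Bool) : Decidable (IsDerB u) := by
  unfold IsDerB; infer_instance

/-- the type `B` derangement polynomial -/
noncomputable def dB (n : ℕ) : Polynomial ℝ :=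
  ∑ u ∈ univ.filter (fun u : Fin n → Fin n × Bool => IsSP u ∧ IsDerB u), X ^ excB u

/-- the number of type `B` descents -/
def desB {n : ℕ} (u : Fin n → Fin n × Bool) : ℕ :=
  (univ.filter fun i : Fin n =>
    ((i : ℕ) = 0 ∧ letterW u i < 0) ∨
    (0 < (i : ℕ) ∧ letterW u i < letterW u ⟨(i : ℕ) - 1, by have := i.isLt; omega⟩)).card

/-- the type `B` Eulerian polynomial -/
noncomputable def Bpoly (n : ℕ) : Polynomial ℝ :=
  ∑ u ∈ univ.filter (fun u : Fin n → Fin n × Bool => IsSP u), X ^ desB u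

/-- the "positive half" type `B` Eulerian polynomial -/
noncomputable def Bplus : ℕ → Polynomial ℝ
  | 0 => 1
  | n + 1 =>
    ∑ u ∈ univ.filter (fun u : Fin (n + 1) → Fin (n + 1) × Bool =>
        IsSP u ∧ 0 < letterW u (Fin.last n)), X ^ desB u

/-- the "negative half" type `B` Eulerian polynomial -/
noncomputable def Bminus : ℕ → Polynomial ℝ
  | 0 => 0
  | n + 1 =>
    ∑ u ∈ univ.filter (fun u : Fin (n + 1) → Fin (n + 1) × Bool =>
        IsSP u ∧ letterW u (Fin.last n) < 0), X ^ desB u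

/-- the number of excedances of a permutation -/
def excA {n : ℕ} (w : Equiv.Perm (Fin n)) : ℕ :=
  (univ.filter fun i : Fin n => i < w i).card

/-- the number of descents of a permutation -/
def desA {n : ℕ} (w : Equiv.Perm (Fin n)) : ℕ :=
  (univ.filter fun i : Fin n =>
    (i : ℕ) + 1 < n ∧ w ⟨((i : ℕ) + 1) % n, Nat.mod_lt _ i.pos⟩ < w i).card

/-- the (type `A`) derangement polynomial -/
noncomputable def dA (n : ℕ) : Polynomial ℝ :=
  ∑ w ∈ univ.filter (fun w : Equiv.Perm (Fin n) => ∀ i, w i ≠ i), X ^ excA w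

/-- the Eulerian polynomial, with the convention `A_0 = 0` -/
noncomputable def Apoly (n : ℕ) : Polynomial ℝ :=
  if n = 0 then 0 else ∑ w : Equiv.Perm (Fin n), X ^ desA w

/-- flip all signs of the letters of a signed word -/
def flipSP {n : ℕ} (u : Fin n → Fin n × Bool) : Fin n → Fin n × Bool :=
  fun i => ((u i).1, !(u i).2)

lemma flipSP_flipSP {n : ℕ} (u : Fin n → Fin n × Bool) : flipSP (flipSP u) = u := by
  funext i; simp [flipSP]

lemma isSP_flip {n : ℕ} (u : Fin n → Fin n × Bool) (h : IsSP u) : IsSP (flipSP u) := h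

lemma letterW_flip {n : ℕ} (u : Fin n → Fin n × Bool) (i : Fin n) :
    letterW (flipSP u) i = - letterW u i := by
  unfold letterW flipSP
  rcases h : (u i).2 <;> simp [h]

lemma letterW_ne_zero {n : ℕ} (u : Fin n → Fin n × Bool) (i : Fin n) :
    letterW u i ≠ 0 := by
  unfold letterW; split <;> omega

lemma letterW_inj {n : ℕ} (u : Fin n → Fin n × Bool) (hu : IsSP u) {i j : Fin n}
    (h : letterW u i = letterW u j) : i = j := by
  have h1 : (u i).1 = (u j).1 := by
    unfold letterW at h
    have hi := ((u i).1).isLt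
    have hj := ((u j).1).isLt
    apply Fin.ext
    split at h <;> split at h <;> omega
  exact hu.1 h1

lemma desB_flip {n : ℕ} (u : Fin n → Fin n × Bool) (hu : IsSP u) :
    desB (flipSP u) = n - desB u := by
  unfold desB
  have hfc : (univ.filter fun i : Fin n =>
      ((i : ℕ) = 0 ∧ letterW (flipSP u) i < 0) ∨
      (0 < (i : ℕ) ∧ letterW (flipSP u) i <
        letterW (flipSP u) ⟨(i : ℕ) - 1, by have := i.isLt; omega⟩)) =
      (univ.filter fun i : Fin n => ¬ (((i : ℕ) = 0 ∧ letterW u i < 0) ∨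
      (0 < (i : ℕ) ∧ letterW u i < letterW u ⟨(i : ℕ) - 1, by have := i.isLt; omega⟩))) := by
    apply filter_congr
    intro i _
    rw [letterW_flip, letterW_flip]
    have h0 : letterW u i ≠ 0 := letterW_ne_zero u i
    by_cases hi : (i : ℕ) = 0
    · simp only [hi]
      constructor
      · rintro (⟨-, h⟩ | ⟨h, -⟩)
        · rintro (⟨-, h'⟩ | ⟨h', -⟩) <;> omega
        · omega
      · intro h
        left
        refine ⟨trivial, ?_⟩
        by_contra hc
        exact h (Or.inl ⟨trivial, by omega⟩)
    · have hpos : 0 < (i : ℕ) := Nat.pos_of_ne_zero hi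
      have hne : letterW u i ≠ letterW u ⟨(i : ℕ) - 1, by have := i.isLt; omega⟩ := by
        intro h
        have := letterW_inj u hu h
        apply hi
        have : (i : ℕ) = (i : ℕ) - 1 := congrArg Fin.val this
        omega
      constructor
      · rintro (⟨h, -⟩ | ⟨-, h⟩)
        · omega
        · rintro (⟨h', -⟩ | ⟨-, h'⟩) <;> omega
      · intro h
        right
        refine ⟨hpos, ?_⟩
        by_contra hc
        exact h (Or.inr ⟨hpos, by omega⟩)
  rw [hfc, filter_not, card_sdiff_of_subset (filter_subset _ _), card_univ, Fintype.card_fin]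

lemma desB_le {n : ℕ} (u : Fin n → Fin n × Bool) : desB u ≤ n := by
  unfold desB
  calc _ ≤ (univ : Finset (Fin n)).card := card_filter_le _ _
  _ = n := by simp

/-- For `n ≥ 1`, `B_n^-(x) = x^n B_n^+(1/x)`: the coefficient of `x^k` in `B_n^-` equals
the coefficient of `x^{n−k}` in `B_n^+`, for all `0 ≤ k ≤ n`. -/
theorem Bminus_eq_reverse_Bplus (n : ℕ) (hn : 1 ≤ n) :
    ∀ k ≤ n, (Bminus n).coeff k = (Bplus n).coeff (n - k) := by
  obtain ⟨m, rfl⟩ : ∃ m, n = m + 1 := ⟨n - 1, by omega⟩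
  intro k hk
  rw [Bminus, Bplus, finset_sum_coeff, finset_sum_coeff]
  simp only [coeff_X_pow]
  refine Finset.sum_nbij' (fun u => flipSP u) (fun u => flipSP u) ?_ ?_ ?_ ?_ ?_
  · intro u hu
    simp only [mem_filter, mem_univ, true_and] at hu ⊢
    refine ⟨isSP_flip u hu.1, ?_⟩
    rw [letterW_flip]
    have := hu.2
    omega
  · intro u hu
    simp only [mem_filter, mem_univ, true_and] at hu ⊢
    refine ⟨isSP_flip u hu.1, ?_⟩
    rw [letterW_flip]
    have := hu.2
    omega
  · intro u _; exact flipSP_flipSP u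
  · intro u _; exact flipSP_flipSP u
  · intro u hu
    simp only [mem_filter, mem_univ, true_and] at hu
    rw [desB_flip u hu.1]
    have h1 : desB u ≤ m + 1 := desB_le u
    congr 1
    simp only [eq_iff_iff]
    omega
end

section
/- For every n ≥ 1, B_n^+(x) = 2(n−1)x · B_{n−1}^+(x) + 2x(1−x) · (d/dx) B_{n−1}^+(x) + B_{n−1}(x). -/
/-!
Delete the letter `±n` of largest absolute value from a word counted by `B_n^+`. If it is the
last letter it is `+n`, creates no descent, and the rest is an arbitrary signed permutation: this
gives `B_{n-1}`. Otherwise the rest is counted by `B_{n-1}^+` and the sign of the deleted letter is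
free. Inserting `±n` between two adjacent letters of a word with `d` descents (read after the
sentinel `w(a_0) = 0`) gives `d` descents if these letters formed a descent and `d + 1` otherwise,
whatever the sign. Summing over the two signs and the `n - 1` gaps gives
`2 (d x^d + (n - 1 - d) x^(d+1)) = 2 (n - 1) x · x^d + 2 x (1 - x) (x^d)'`.
-/

open Polynomial Finset

section Descents

variable {α : Type*} [LinearOrder α] {k : ℕ}

def descents (a : Fin (k + 1) → α) : ℕ :=
  #{i : Fin k | a i.succ < a i.castSucc}

/-- `x` lands right after `a p`; the pair ending at `a i.succ` now starts at `x` iff `i = p`. -/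
lemma descents_insertNth_succ (a : Fin (k + 1) → α) (p : Fin (k + 1)) (x : α) :
    descents (p.succ.insertNth x a) =
      (if x < a p then 1 else 0) +
        ∑ i : Fin k, if i.castSucc = p then (if a i.succ < x then 1 else 0)
          else if a i.succ < a i.castSucc then 1 else 0 := by
  rw [descents, card_filter, Fin.sum_univ_succAbove _ p, ← Fin.succAbove_succ_self,
    Fin.insertNth_apply_same, Fin.insertNth_apply_succAbove]
  congr 1
  refine sum_congr rfl fun i _ => ?_
  have hprev : (p.succ.insertNth x a : Fin (k + 2) → α) (p.succAbove i).castSucc =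
      if i.castSucc = p then x else a i.castSucc := by
    split_ifs with h
    · subst h
      rw [Fin.succAbove_castSucc_self, Fin.succ_castSucc, Fin.insertNth_apply_same]
    · have : (p.succAbove i).castSucc = p.succ.succAbove i.castSucc := by
        simp only [Fin.succAbove, Fin.lt_def, Fin.ext_iff, Fin.val_castSucc, Fin.val_succ] at h ⊢
        split_ifs <;> simp only [Fin.val_castSucc, Fin.val_succ] <;> omega
      rw [this, Fin.insertNth_apply_succAbove]
  rw [← Fin.succ_succAbove_succ, Fin.insertNth_apply_succAbove, hprev]
  split_ifs <;> rfl

lemma descents_insertNth_succ_last (a : Fin (k + 1) → α) {x : α} (hx : a (Fin.last k) ≤ x) :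
    descents ((Fin.last k).succ.insertNth x a) = descents a := by
  rw [descents_insertNth_succ, if_neg hx.not_gt, zero_add, descents, card_filter]
  exact sum_congr rfl fun i _ => if_neg (Fin.castSucc_lt_last i).ne

lemma descents_insertNth_succ_castSucc (a : Fin (k + 1) → α) (q : Fin k) {x : α}
    (hx : (∀ j, a j < x) ∨ ∀ j, x < a j) :
    descents (q.castSucc.succ.insertNth x a) =
      descents a + if a q.succ < a q.castSucc then 0 else 1 := by
  rw [descents_insertNth_succ, descents, card_filter, ← add_sum_erase _ _ (mem_univ q),
    ← add_sum_erase _ _ (mem_univ q), if_pos rfl,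
    sum_congr rfl fun i hi => if_neg (Fin.castSucc_injective _ |>.ne (ne_of_mem_erase hi))]
  rcases hx with hx | hx <;> simp only [(hx _).not_gt, hx, if_true, if_false] <;> split_ifs <;> omega

end Descents

lemma sum_pow_add_ite {ι R : Type*} [Fintype ι] [Semiring R] (x : R) (P : ι → Prop)
    [DecidablePred P] (d : ℕ) :
    ∑ i, x ^ (d + if P i then 0 else 1) = #{i | P i} • x ^ d + #{i | ¬P i} • x ^ (d + 1) := by
  calc ∑ i, x ^ (d + if P i then 0 else 1) = ∑ i, if P i then x ^ d else x ^ (d + 1) :=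
        sum_congr rfl fun i _ => by split_ifs <;> rfl
    _ = _ := by rw [sum_ite, sum_const, sum_const]

lemma two_mul_nsmul_X_pow_add_nsmul_X_pow_succ (a b : ℕ) :
    2 * (a • X ^ a + b • X ^ (a + 1) : ℝ[X]) =
      ((2 * (a + b) : ℕ) : ℝ[X]) * X * X ^ a + 2 * X * (1 - X) * derivative (X ^ a : ℝ[X]) := by
  rw [derivative_X_pow]
  rcases a with _ | a
  · simp only [zero_smul, zero_add, Nat.cast_zero, map_zero, zero_mul, mul_zero, add_zero]
    push_cast
    ring
  · simp only [nsmul_eq_mul, map_natCast, Nat.add_sub_cancel]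
    push_cast
    ring

section SignedPermutations

variable {m n : ℕ}

/-- The word `w(a_0) w(a_1) ⋯ w(a_n)`, with the convention `w(a_0) = 0`. -/
def paddedWord (u : Fin n → Fin n × Bool) : Fin (n + 1) → ℤ :=
  Fin.cons 0 (letterW u)

lemma desB_eq_descents (u : Fin n → Fin n × Bool) : desB u = descents (paddedWord u) := by
  rw [desB, descents]
  congr 1
  refine filter_congr fun i _ => ?_
  obtain ⟨_ | j, hj⟩ := i
  · have : (Fin.castSucc ⟨0, hj⟩ : Fin (n + 1)) = 0 := rfl
    simp only [paddedWord, this, Fin.cons_succ, Fin.cons_zero]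
    simp
  · have : (Fin.castSucc ⟨j + 1, hj⟩ : Fin (n + 1)) = Fin.succ ⟨j, by omega⟩ := rfl
    simp only [paddedWord, this, Fin.cons_succ]
    simp

lemma abs_paddedWord_le (u : Fin n → Fin n × Bool) (j : Fin (n + 1)) :
    |paddedWord u j| ≤ n := by
  induction j using Fin.cases with
  | zero => simp [paddedWord]
  | succ i =>
    have := (u i).1.isLt
    simp only [paddedWord, Fin.cons_succ, letterW]
    split_ifs <;> rw [abs_le] <;> constructor <;> omega

def insertMax (v : Fin m → Fin m × Bool) (p : Fin (m + 1)) (b : Bool) :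
    Fin (m + 1) → Fin (m + 1) × Bool :=
  p.insertNth (Fin.last m, b) fun i => ((v i).1.castSucc, (v i).2)

lemma letterW_insertMax (v : Fin m → Fin m × Bool) (p : Fin (m + 1)) (b : Bool) :
    letterW (insertMax v p b) =
      p.insertNth (if b then (m : ℤ) + 1 else -((m : ℤ) + 1)) (letterW v) := by
  funext j
  cases j using Fin.succAboveCases p <;> simp [letterW, insertMax]

lemma paddedWord_insertMax (v : Fin m → Fin m × Bool) (p : Fin (m + 1)) (b : Bool) :
    paddedWord (insertMax v p b) =
      p.succ.insertNth (if b then (m : ℤ) + 1 else -((m : ℤ) + 1)) (paddedWord v) := by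
  rw [paddedWord, paddedWord, letterW_insertMax, Fin.insertNth_succ_cons]

lemma desB_insertMax_last (v : Fin m → Fin m × Bool) :
    desB (insertMax v (Fin.last m) true) = desB v := by
  rw [desB_eq_descents, desB_eq_descents, paddedWord_insertMax, if_pos rfl]
  exact descents_insertNth_succ_last _ <| by
    have := abs_le.mp (abs_paddedWord_le v (Fin.last m)); omega

lemma desB_insertMax_castSucc (v : Fin m → Fin m × Bool) (q : Fin m) (b : Bool) :
    desB (insertMax v q.castSucc b) =
      desB v + if paddedWord v q.succ < paddedWord v q.castSucc then 0 else 1 := by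
  rw [desB_eq_descents, desB_eq_descents, paddedWord_insertMax]
  refine descents_insertNth_succ_castSucc _ q ?_
  have := fun j => abs_le.mp (abs_paddedWord_le v j)
  cases b
  · exact .inr fun j => by have := this j; simp only [Bool.false_eq_true, if_false]; omega
  · exact .inl fun j => by have := this j; simp only [if_true]; omega

lemma isSP_insertMax {v : Fin m → Fin m × Bool} (hv : IsSP v) (p : Fin (m + 1)) (b : Bool) :
    IsSP (insertMax v p b) := by
  refine Finite.surjective_iff_bijective.mp fun k => ?_
  induction k using Fin.lastCases with
  | last => exact ⟨p, by simp [insertMax]⟩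
  | cast k =>
    obtain ⟨i, hi⟩ := hv.surjective k
    exact ⟨p.succAbove i, by simp [insertMax, hi]⟩

lemma insertMax_inj {v v' : Fin m → Fin m × Bool} {p p' : Fin (m + 1)} {b b' : Bool}
    (h : insertMax v p b = insertMax v' p' b') : v = v' ∧ p = p' ∧ b = b' := by
  obtain rfl : p = p' := by
    by_contra hne
    obtain ⟨i, rfl⟩ := Fin.exists_succAbove_eq hne
    have := congrArg (fun u => (u (p'.succAbove i)).1) h
    simp [insertMax, (Fin.castSucc_lt_last _).ne'] at this
  obtain ⟨hb, hv⟩ := Fin.insertNth_inj.mp h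
  refine ⟨funext fun i => ?_, rfl, (Prod.mk.inj hb).2⟩
  obtain ⟨h1, h2⟩ := Prod.mk.inj (congrFun hv i)
  exact Prod.ext (Fin.castSucc_injective _ h1) h2

lemma exists_insertMax_eq {u : Fin (m + 1) → Fin (m + 1) × Bool} (hu : IsSP u) :
    ∃ v p b, IsSP v ∧ insertMax v p b = u := by
  obtain ⟨p, hp⟩ := hu.surjective (Fin.last m)
  have hne (i : Fin m) : (u (p.succAbove i)).1 ≠ Fin.last m := fun h =>
    Fin.succAbove_ne p i (hu.injective (h.trans hp.symm))
  refine ⟨fun i => ((u (p.succAbove i)).1.castPred (hne i), (u (p.succAbove i)).2), p, (u p).2,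
    Finite.injective_iff_bijective.mp fun i j h => ?_, ?_⟩
  · simp only [Fin.castPred_inj] at h
    exact Fin.succAbove_right_injective (hu.injective h)
  · rw [insertMax, Fin.insertNth_eq_iff]
    exact ⟨Prod.ext hp.symm rfl, funext fun i => Prod.ext (Fin.castSucc_castPred _ (hne i)) rfl⟩

lemma sum_isSP_succ {M : Type*} [AddCommMonoid M] (f : (Fin (m + 1) → Fin (m + 1) × Bool) → M) :
    ∑ u ∈ univ.filter IsSP, f u =
      ∑ p, ∑ b, ∑ v ∈ univ.filter IsSP, f (insertMax v p b) := by
  calc ∑ u ∈ univ.filter IsSP, f u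
      = ∑ x ∈ univ ×ˢ univ ×ˢ univ.filter IsSP, f (insertMax x.2.2 x.1 x.2.1) := by
        refine (sum_nbij (fun x : Fin (m + 1) × Bool × (Fin m → Fin m × Bool) =>
          insertMax x.2.2 x.1 x.2.1) ?_ ?_ ?_ fun _ _ => rfl).symm
        · simp only [mem_product, mem_filter, mem_univ, true_and]
          exact fun x hx => isSP_insertMax hx _ _
        · rintro ⟨p, b, v⟩ - ⟨p', b', v'⟩ - h
          obtain ⟨rfl, rfl, rfl⟩ := insertMax_inj h
          rfl
        · intro u hu
          obtain ⟨v, p, b, hv, rfl⟩ := exists_insertMax_eq (mem_filter.mp hu).2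
          exact ⟨(p, b, v), by simpa using hv, rfl⟩
    _ = _ := by
      rw [sum_product]
      exact sum_congr rfl fun p _ => sum_product _ _ _

lemma letterW_insertMax_self (v : Fin m → Fin m × Bool) (p : Fin (m + 1)) (b : Bool) :
    letterW (insertMax v p b) p = if b then (m : ℤ) + 1 else -((m : ℤ) + 1) := by
  rw [letterW_insertMax, Fin.insertNth_apply_same]

lemma letterW_insertMax_castSucc_last {k : ℕ} (v : Fin (k + 1) → Fin (k + 1) × Bool)
    (q : Fin (k + 1)) (b : Bool) :
    letterW (insertMax v q.castSucc b) (Fin.last (k + 1)) = letterW v (Fin.last k) := by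
  rw [letterW_insertMax, ← Fin.succ_last, ← Fin.succAbove_castSucc_of_le _ _ q.le_last,
    Fin.insertNth_apply_succAbove]

end SignedPermutations

lemma Bplus_succ_eq_sum (m : ℕ) :
    Bplus (m + 1) = ∑ u ∈ univ.filter IsSP,
      if 0 < letterW u (Fin.last m) then X ^ desB u else 0 := by
  rw [Bplus, ← sum_filter, filter_filter]

lemma sum_insertMax_last (m : ℕ) :
    ∑ b, ∑ v ∈ univ.filter IsSP,
      (if 0 < letterW (insertMax v (Fin.last m) b) (Fin.last m)
        then X ^ desB (insertMax v (Fin.last m) b) else 0) = Bpoly m := by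
  have hpos : (0 : ℤ) < m + 1 := by positivity
  have hneg : ¬ (0 : ℤ) < -(m + 1) := by omega
  simp only [letterW_insertMax_self, Fintype.sum_bool, if_true, Bool.false_eq_true, if_false,
    desB_insertMax_last, if_pos hpos, if_neg hneg, sum_const_zero, add_zero]
  rfl

lemma sum_insertMax_castSucc (k : ℕ) :
    ∑ q : Fin (k + 1), ∑ b, ∑ v ∈ univ.filter IsSP,
      (if 0 < letterW (insertMax v q.castSucc b) (Fin.last (k + 1))
        then X ^ desB (insertMax v q.castSucc b) else 0) =
      ((2 * (k + 1) : ℕ) : ℝ[X]) * X * Bplus (k + 1)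
        + 2 * X * (1 - X) * derivative (Bplus (k + 1)) := by
  rw [Bplus_succ_eq_sum, map_sum, mul_sum, mul_sum, ← sum_add_distrib,
    sum_congr rfl fun q _ => sum_comm, sum_comm]
  refine sum_congr rfl fun v _ => ?_
  simp only [letterW_insertMax_castSucc_last, desB_insertMax_castSucc]
  split_ifs
  · simp only [Fintype.sum_bool, ← two_mul, ← mul_sum]
    have hcard :
        desB v + #{i : Fin (k + 1) | ¬paddedWord v i.succ < paddedWord v i.castSucc} = k + 1 := by
      rw [desB_eq_descents, descents, card_filter_add_card_filter_not, card_univ,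
        Fintype.card_fin]
    rw [sum_pow_add_ite, ← descents, ← desB_eq_descents,
      two_mul_nsmul_X_pow_add_nsmul_X_pow_succ, hcard]
  · simp

/-- For `n ≥ 1`,
`B_n^+(x) = 2(n−1)x B_{n−1}^+(x) + 2x(1−x) (B_{n−1}^+)'(x) + B_{n−1}(x)`. -/
theorem Bplus_recurrence (n : ℕ) (hn : 1 ≤ n) :
    Bplus n = ((2 * (n - 1) : ℕ) : Polynomial ℝ) * X * Bplus (n - 1)
        + 2 * X * (1 - X) * Polynomial.derivative (Bplus (n - 1))
        + Bpoly (n - 1) := by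
  obtain ⟨m, rfl⟩ := Nat.exists_eq_add_of_le' hn
  rw [Nat.add_sub_cancel, Bplus_succ_eq_sum, sum_isSP_succ, Fin.sum_univ_castSucc,
    sum_insertMax_last]
  congr 1
  cases m with
  | zero => simp [Bplus]
  | succ k => exact sum_insertMax_castSucc k
end
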